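/- Let G be a group, K ≤ G of finite index, and N ◁ K a normal subgroup of K such that K/N is finitely generated and virtually abelian. Then there exists a finitely generated virtually abelian group A and a homomorphism φ : G → A with ker φ ⊆ N. -/

import Mathlib

/-- A group is virtually abelian if it has an abelian subgroup of finite index. -/
def VirtuallyAbelian (G : Type*) [Group G] : Prop :=
  ∃ H : Subgroup G, H.FiniteIndex ∧ ∀ x ∈ H, ∀ y ∈ H, x * y = y * x

section Aux

open Subgroup SemidirectProduct

variable {X : Type*} {Q : Type*} [Group Q]

/-- The action of permutations of `X` on `X → Q` by precomposition with the inverse. -/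
def permArrowAut : Equiv.Perm X →* MulAut (X → Q) where
  toFun p :=
    { toFun := fun f => f ∘ p.symm
      invFun := fun f => f ∘ p
      left_inv := fun f => by funext x; simp
      right_inv := fun f => by funext x; simp
      map_mul' := fun f g => rfl }
  map_one' := by ext f x; rfl
  map_mul' := fun p q => by ext f x; rfl

@[simp] lemma permArrowAut_apply (p : Equiv.Perm X) (f : X → Q) (x : X) :
    (permArrowAut p f) x = f (p.symm x) := rfl

/-- A pi-group over a finite index type with f.g. factors is f.g. -/
lemma group_fg_pi [Finite X] [hQ : Group.FG Q] : Group.FG (X → Q) := by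
  classical
  cases nonempty_fintype X
  obtain ⟨S, hS⟩ := hQ.out
  rw [Group.fg_iff]
  refine ⟨⋃ x : X, (Pi.mulSingle x) '' (S : Set Q), ?_, ?_⟩
  · rw [eq_top_iff]
    intro f _
    refine Subgroup.pi_mem_of_mulSingle_mem f (fun i => ?_)
    have h1 : (Pi.mulSingle i (f i) : X → Q) ∈
        (Subgroup.closure ((S : Set Q))).map (MonoidHom.mulSingle (fun _ : X => Q) i) := by
      exact ⟨f i, by rw [hS]; trivial, rfl⟩
    rw [MonoidHom.map_closure] at h1
    refine Subgroup.closure_mono ?_ h1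
    intro y hy
    exact Set.mem_iUnion.2 ⟨i, hy⟩
  · exact Set.finite_iUnion (fun x => (S.finite_toSet).image _)

/-- A semidirect product of a f.g. group with a finite group is f.g. -/
lemma group_fg_sdp {P : Type*} [Group P] [Finite P] [hQ : Group.FG Q]
    (ρ : P →* MulAut Q) : Group.FG (Q ⋊[ρ] P) := by
  obtain ⟨S, hS⟩ := hQ.out
  rw [Group.fg_iff]
  refine ⟨(inl '' (S : Set Q)) ∪ (Set.range (inr : P → Q ⋊[ρ] P)), ?_, ?_⟩
  · rw [eq_top_iff]
    intro a _
    rw [← inl_left_mul_inr_right a]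
    refine mul_mem ?_ (Subgroup.subset_closure (Or.inr ⟨a.right, rfl⟩))
    have h1 : (inl a.left : Q ⋊[ρ] P) ∈
        (Subgroup.closure ((S : Set Q))).map (inl : Q →* Q ⋊[ρ] P) :=
      ⟨a.left, by rw [hS]; trivial, rfl⟩
    rw [MonoidHom.map_closure] at h1
    exact Subgroup.closure_mono (fun y hy => Or.inl hy) h1
  · exact ((S.finite_toSet).image _).union (Set.finite_range _)

/-- A semidirect product of a virtually abelian group with a finite group is
virtually abelian. -/
lemma va_sdp {P : Type*} [Group P] [Finite P] [Finite X]
    (hva : VirtuallyAbelian Q) (ρ : P →* MulAut (X → Q)) :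
    VirtuallyAbelian ((X → Q) ⋊[ρ] P) := by
  classical
  cases nonempty_fintype X
  obtain ⟨H, hHfi, hHcomm⟩ := hva
  refine ⟨(Subgroup.pi Set.univ (fun _ : X => H)).map inl, ?_, ?_⟩
  · constructor
    rw [Subgroup.index_map_of_injective _ inl_injective]
    have h1 : (inl : (X → Q) →* (X → Q) ⋊[ρ] P).range = (rightHom).ker :=
      range_inl_eq_ker_rightHom
    rw [h1, Subgroup.index_ker, Subgroup.index_pi]
    refine mul_ne_zero (Finset.prod_ne_zero_iff.2 fun i _ => hHfi.index_ne_zero) ?_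
    exact Nat.card_ne_zero.2 ⟨⟨1, one_mem _⟩, Subtype.finite⟩
  · rintro x ⟨f, hf, rfl⟩ y ⟨g, hg, rfl⟩
    rw [← map_mul, ← map_mul]
    congr 1
    funext i
    exact hHcomm (f i) (hf i trivial) (g i) (hg i trivial)

end Aux


section Induced

open Subgroup SemidirectProduct

variable {G : Type*} [Group G] (K : Subgroup G) (N : Subgroup ↥K) [N.Normal]

lemma coc_mem (g : G) (x : G ⧸ K) :
    (Quotient.out x)⁻¹ * g * (Quotient.out (g⁻¹ • x)) ∈ K := by
  rw [mul_assoc, ← QuotientGroup.eq]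
  calc (QuotientGroup.mk (Quotient.out x) : G ⧸ K) = x := Quotient.out_eq x
    _ = g • (g⁻¹ • x) := (smul_inv_smul g x).symm
    _ = g • (QuotientGroup.mk (Quotient.out (g⁻¹ • x)) : G ⧸ K) := by
        exact congrArg (g • ·) (Quotient.out_eq (g⁻¹ • x)).symm
    _ = QuotientGroup.mk (g * Quotient.out (g⁻¹ • x)) := rfl

/-- The induced homomorphism from `G` to the permutational wreath product. -/
noncomputable def inducedHom : G →* ((G ⧸ K → ↥K ⧸ N) ⋊[permArrowAut] Equiv.Perm (G ⧸ K)) where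
  toFun g := ⟨fun x => QuotientGroup.mk
      (⟨(Quotient.out x)⁻¹ * g * (Quotient.out (g⁻¹ • x)), coc_mem K g x⟩ : ↥K),
    MulAction.toPermHom G (G ⧸ K) g⟩
  map_one' := by
    refine SemidirectProduct.ext ?_ (map_one _)
    funext x
    show QuotientGroup.mk _ = (1 : ↥K ⧸ N)
    rw [QuotientGroup.eq_one_iff]
    have h : (⟨(Quotient.out x)⁻¹ * 1 * (Quotient.out ((1:G)⁻¹ • x)), coc_mem K 1 x⟩ : ↥K)
        = 1 := by
      apply Subtype.ext
      simp
    rw [h]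
    exact one_mem N
  map_mul' g h := by
    refine SemidirectProduct.ext ?_ (map_mul _ g h)
    funext x
    show QuotientGroup.mk _ = _
    have hact : (MulAction.toPermHom G (G ⧸ K) g).symm x = g⁻¹ • x := by simp
    show _ = (QuotientGroup.mk _ : ↥K ⧸ N) * QuotientGroup.mk
        (⟨(Quotient.out ((MulAction.toPermHom G (G ⧸ K) g).symm x))⁻¹ * h *
          (Quotient.out (h⁻¹ • ((MulAction.toPermHom G (G ⧸ K) g).symm x))), _⟩ : ↥K)
    rw [← QuotientGroup.mk_mul]
    apply congrArg
    apply Subtype.ext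
    show (Quotient.out x)⁻¹ * (g * h) * (Quotient.out ((g * h)⁻¹ • x)) = _
    simp only [hact, MulMemClass.coe_mul]
    show _ = ((Quotient.out x)⁻¹ * g * (Quotient.out (g⁻¹ • x))) *
      ((Quotient.out (g⁻¹ • x))⁻¹ * h * (Quotient.out (h⁻¹ • (g⁻¹ • x))))
    rw [mul_inv_rev, mul_smul]
    group

end Induced

/-- If `K ≤ G` has finite index and `N ◁ K` with `K/N` finitely generated and virtually
abelian, then there is a finitely generated virtually abelian group `A` and a
homomorphism `φ : G → A` with `ker φ ⊆ N`. -/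
theorem exists_hom_to_fg_virtuallyAbelian_with_ker_le.{u} (G : Type u) [Group G]
    (K : Subgroup G) (hK : K.FiniteIndex) (N : Subgroup ↥K) [N.Normal]
    (hfg : Group.FG (↥K ⧸ N)) (hva : VirtuallyAbelian (↥K ⧸ N)) :
    ∃ (A : Type u) (_ : Group A) (φ : G →* A), Group.FG A ∧ VirtuallyAbelian A ∧
      ∀ g : G, φ g = 1 → ∃ hg : g ∈ K, (⟨g, hg⟩ : ↥K) ∈ N := by
  classical
  haveI := hK
  haveI : Group.FG (↥K ⧸ N) := hfg
  haveI : Group.FG (G ⧸ K → ↥K ⧸ N) := group_fg_pi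
  refine ⟨(G ⧸ K → ↥K ⧸ N) ⋊[permArrowAut] Equiv.Perm (G ⧸ K), inferInstance,
    inducedHom K N, group_fg_sdp _, va_sdp hva _, ?_⟩
  intro g hg1
  have hright : MulAction.toPermHom G (G ⧸ K) g = 1 :=
    congrArg SemidirectProduct.right hg1
  have h2 : ((g * 1 : G) : G ⧸ K) = ((1 : G) : G ⧸ K) := by
    have := DFunLike.congr_fun hright (((1 : G) : G ⧸ K))
    simpa using this
  rw [mul_one] at h2
  have hgK : g ∈ K := by
    have := (QuotientGroup.eq (s := K) (a := g) (b := 1)).mp h2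
    simpa using inv_mem this
  refine ⟨hgK, ?_⟩
  set x₀ : G ⧸ K := ((1 : G) : G ⧸ K) with hx₀def
  have hleft := congrArg SemidirectProduct.left hg1
  have h3 : QuotientGroup.mk
      (⟨(Quotient.out x₀)⁻¹ * g * (Quotient.out (g⁻¹ • x₀)), coc_mem K g x₀⟩ : ↥K)
      = (1 : ↥K ⧸ N) := congrFun hleft x₀
  rw [QuotientGroup.eq_one_iff] at h3
  have hfix : g⁻¹ • x₀ = x₀ := by
    show ((g⁻¹ * 1 : G) : G ⧸ K) = ((1 : G) : G ⧸ K)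
    rw [mul_one, QuotientGroup.eq]
    simpa using inv_mem hgK
  have hs : Quotient.out x₀ ∈ K := by
    have h4 : (QuotientGroup.mk (Quotient.out x₀) : G ⧸ K) = ((1 : G) : G ⧸ K) :=
      Quotient.out_eq x₀
    have := (QuotientGroup.eq (s := K)).mp h4
    simpa using this
  set sK : ↥K := ⟨Quotient.out x₀, hs⟩ with hsKdef
  have h5 : (⟨(Quotient.out x₀)⁻¹ * g * (Quotient.out (g⁻¹ • x₀)), coc_mem K g x₀⟩ : ↥K)
      = sK⁻¹ * ⟨g, hgK⟩ * sK := by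
    apply Subtype.ext
    show (Quotient.out x₀)⁻¹ * g * (Quotient.out (g⁻¹ • x₀))
      = (Quotient.out x₀)⁻¹ * g * (Quotient.out x₀)
    rw [hfix]
  rw [h5] at h3
  have h6 : (⟨g, hgK⟩ : ↥K) = sK * (sK⁻¹ * ⟨g, hgK⟩ * sK) * sK⁻¹ := by group
  rw [h6]
  exact ‹N.Normal›.conj_mem _ h3 sK
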